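/- arXiv:2504.10363 — 4 statements merged into one kernel-verified Lean document; each statement's English description precedes it below -/
import Mathlib

section
/- Let N ≥ 13 be a natural number. Let P : (Fin N → Bool) → ℝ take only the values −1 and 1 and satisfy P̂(univ)² ≥ 1/(2N), where P̂(univ) is the Fourier–Walsh coefficient of P at the full index set. Let ε be a real number with 0 ≤ ε ≤ 1/(2N²), let S be a finite set of points of the Boolean cube with |S| ≥ 2^N·(1 − 1/N²), and let Q : (Fin N → Bool) → ℝ satisfy |Q(x)| ≤ 1 for every x and Q(x)·P(x) ≥ 1 − 2ε for every x ∈ S. Then Q̂(univ) ≠ 0; in particular the Fourier degree of Q equals N. -/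
open Finset

/-- Hamming weight of a point of the Boolean cube. -/
def hw {N : ℕ} (x : Fin N → Bool) : ℕ :=
  (Finset.univ.filter fun i => x i = true).card

/-- Walsh character at index set `B`. -/
noncomputable def walsh {N : ℕ} (B : Finset (Fin N)) (x : Fin N → Bool) : ℝ :=
  (-1 : ℝ) ^ (B.filter fun i => x i = true).card

/-- Fourier–Walsh coefficient of `f` at `B`. -/
noncomputable def walshCoeff {N : ℕ} (f : (Fin N → Bool) → ℝ) (B : Finset (Fin N)) : ℝ :=
  ((2 : ℝ) ^ N)⁻¹ * ∑ x : Fin N → Bool, f x * walsh B x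

open Classical in
/-- Fourier degree of `f`: the largest size of an index set with nonzero coefficient. -/
noncomputable def walshDegree {N : ℕ} (f : (Fin N → Bool) → ℝ) : ℕ :=
  (Finset.univ.filter fun B : Finset (Fin N) => walshCoeff f B ≠ 0).sup Finset.card

theorem stmt_0 {N : ℕ} (hN : 13 ≤ N)
    (P Q : (Fin N → Bool) → ℝ)
    (hP : ∀ x, P x = -1 ∨ P x = 1)
    (hPhat : (walshCoeff P Finset.univ) ^ 2 ≥ 1 / (2 * N))
    (ε : ℝ) (hε0 : 0 ≤ ε) (hε : ε ≤ 1 / (2 * (N : ℝ) ^ 2))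
    (S : Finset (Fin N → Bool))
    (hS : (S.card : ℝ) ≥ 2 ^ N * (1 - 1 / (N : ℝ) ^ 2))
    (hQb : ∀ x, |Q x| ≤ 1)
    (hQP : ∀ x ∈ S, Q x * P x ≥ 1 - 2 * ε) :
    walshCoeff Q Finset.univ ≠ 0 ∧ walshDegree Q = N := by
  classical
  have hNR : (13 : ℝ) ≤ (N : ℝ) := by exact_mod_cast hN
  have hNpos : (0 : ℝ) < (N : ℝ) := by linarith
  have h2N : (0 : ℝ) < (2 : ℝ) ^ N := by positivity
  -- pointwise bounds
  have habsw : ∀ x : Fin N → Bool, |walsh (Finset.univ : Finset (Fin N)) x| = 1 := by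
    intro x
    simp [walsh, abs_pow]
  have hinS : ∀ x ∈ S, |Q x - P x| ≤ 2 * ε := by
    intro x hx
    have h1 := hQP x hx
    have h2 := hQb x
    rcases hP x with h | h <;> rw [h] at h1 ⊢ <;> rw [abs_le] at h2 ⊢ <;>
      constructor <;> nlinarith [h2.1, h2.2]
  have houtS : ∀ x : Fin N → Bool, |Q x - P x| ≤ 2 := by
    intro x
    have h2 := hQb x
    have : |P x| = 1 := by rcases hP x with h | h <;> simp [h]
    calc |Q x - P x| ≤ |Q x| + |P x| := abs_sub _ _
      _ ≤ 2 := by rw [this]; linarith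
  -- the difference of coefficients
  have hsubS : S ⊆ Finset.univ := Finset.subset_univ S
  have hcardu : ((Finset.univ : Finset (Fin N → Bool)).card : ℝ) = 2 ^ N := by
    simp [Finset.card_univ]
  have hScard : (S.card : ℝ) ≤ 2 ^ N := by
    rw [← hcardu]; exact_mod_cast Finset.card_le_card hsubS
  have hsumbound : ∑ x : Fin N → Bool, |Q x - P x| ≤ 2 * ε * 2 ^ N + 2 * (2 ^ N / (N : ℝ) ^ 2) := by
    have hsplit : ∑ x : Fin N → Bool, |Q x - P x|
        = ∑ x ∈ S, |Q x - P x| + ∑ x ∈ Finset.univ \ S, |Q x - P x| := by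
      rw [add_comm, Finset.sum_sdiff hsubS]
    rw [hsplit]
    have hb1 : ∑ x ∈ S, |Q x - P x| ≤ 2 * ε * 2 ^ N := by
      calc ∑ x ∈ S, |Q x - P x| ≤ ∑ _x ∈ S, 2 * ε := Finset.sum_le_sum hinS
        _ = S.card * (2 * ε) := by rw [Finset.sum_const, nsmul_eq_mul]
        _ ≤ 2 ^ N * (2 * ε) := by
            apply mul_le_mul_of_nonneg_right hScard (by linarith)
        _ = 2 * ε * 2 ^ N := by ring
    have hb2 : ∑ x ∈ Finset.univ \ S, |Q x - P x| ≤ 2 * (2 ^ N / (N : ℝ) ^ 2) := by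
      have hc : (((Finset.univ : Finset (Fin N → Bool)) \ S).card : ℝ) ≤ 2 ^ N / (N : ℝ) ^ 2 := by
        rw [Finset.card_sdiff_of_subset hsubS, Nat.cast_sub (Finset.card_le_card hsubS), hcardu]
        have h3 : (2:ℝ) ^ N * (1 - 1 / (N : ℝ) ^ 2) = 2 ^ N - 2 ^ N / (N : ℝ) ^ 2 := by ring
        linarith [hS]
      calc ∑ x ∈ Finset.univ \ S, |Q x - P x| ≤ ∑ _x ∈ Finset.univ \ S, (2:ℝ) :=
            Finset.sum_le_sum (fun x _ => houtS x)
        _ = ((Finset.univ \ S).card : ℝ) * 2 := by rw [Finset.sum_const, nsmul_eq_mul]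
        _ ≤ (2 ^ N / (N : ℝ) ^ 2) * 2 := by
            apply mul_le_mul_of_nonneg_right hc (by norm_num)
        _ = 2 * (2 ^ N / (N : ℝ) ^ 2) := by ring
    linarith
  have hdiff : |walshCoeff Q Finset.univ - walshCoeff P Finset.univ| ≤ 2 * ε + 2 / (N : ℝ) ^ 2 := by
    have heq : walshCoeff Q Finset.univ - walshCoeff P Finset.univ
        = ((2 : ℝ) ^ N)⁻¹ * ∑ x : Fin N → Bool, (Q x - P x) * walsh Finset.univ x := by
      unfold walshCoeff
      rw [← mul_sub, ← Finset.sum_sub_distrib]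
      congr 1
      apply Finset.sum_congr rfl
      intro x _
      ring
    rw [heq, abs_mul, abs_inv, abs_pow, abs_two]
    have habs : |∑ x : Fin N → Bool, (Q x - P x) * walsh Finset.univ x|
        ≤ 2 * ε * 2 ^ N + 2 * (2 ^ N / (N : ℝ) ^ 2) := by
      calc |∑ x : Fin N → Bool, (Q x - P x) * walsh Finset.univ x|
          ≤ ∑ x : Fin N → Bool, |(Q x - P x) * walsh Finset.univ x| :=
            Finset.abs_sum_le_sum_abs _ _
        _ = ∑ x : Fin N → Bool, |Q x - P x| := by
            apply Finset.sum_congr rfl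
            intro x _
            rw [abs_mul, habsw x, mul_one]
        _ ≤ _ := hsumbound
    have hNsq : (0 : ℝ) < (N : ℝ) ^ 2 := by positivity
    calc ((2:ℝ) ^ N)⁻¹ * |∑ x : Fin N → Bool, (Q x - P x) * walsh Finset.univ x|
        ≤ ((2:ℝ) ^ N)⁻¹ * (2 * ε * 2 ^ N + 2 * (2 ^ N / (N : ℝ) ^ 2)) := by
          apply mul_le_mul_of_nonneg_left habs (by positivity)
      _ = 2 * ε + 2 / (N : ℝ) ^ 2 := by field_simp
  -- main inequality
  have hQne : walshCoeff Q Finset.univ ≠ 0 := by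
    intro h0
    rw [h0, zero_sub, abs_neg] at hdiff
    have hb : |walshCoeff P Finset.univ| ≤ 3 / (N : ℝ) ^ 2 := by
      have h3 : (2:ℝ) * (1 / (2 * (N : ℝ) ^ 2)) = 1 / (N : ℝ) ^ 2 := by
        field_simp
      have : 2 * ε ≤ 1 / (N : ℝ) ^ 2 := by
        calc 2 * ε ≤ 2 * (1 / (2 * (N : ℝ) ^ 2)) := by linarith
          _ = 1 / (N : ℝ) ^ 2 := h3
      have h4 : (3:ℝ) / (N : ℝ) ^ 2 = 1 / (N : ℝ) ^ 2 + 2 / (N : ℝ) ^ 2 := by ring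
      linarith
    have hP2 : (walshCoeff P Finset.univ) ^ 2 ≤ (3 / (N : ℝ) ^ 2) ^ 2 := by
      rw [← sq_abs]
      exact pow_le_pow_left₀ (abs_nonneg _) hb 2
    have hlt : (3 / (N : ℝ) ^ 2) ^ 2 < 1 / (2 * N) := by
      rw [div_pow, div_lt_div_iff₀ (by positivity) (by positivity)]
      have h13 : (2197:ℝ) ≤ (N:ℝ)^3 := by nlinarith
      nlinarith [mul_le_mul_of_nonneg_left h13 (le_of_lt hNpos)]
    linarith
  refine ⟨hQne, ?_⟩
  apply le_antisymm
  · apply Finset.sup_le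
    intro B _
    calc B.card ≤ (Finset.univ : Finset (Fin N)).card := Finset.card_le_univ B
      _ = N := by simp
  · have : (Finset.univ : Finset (Fin N)) ∈
        Finset.univ.filter fun B : Finset (Fin N) => walshCoeff Q B ≠ 0 := by
      simp [hQne]
    have h := Finset.le_sup (f := Finset.card) this
    simpa [walshDegree] using h
end

section
/- Let N ≥ 1 be a natural number, let S be a finite set of points of the Boolean cube on N coordinates with |S| ≥ (4/5)·2^N, and let g : (Fin N → Bool) → ℝ satisfy |g(x)| ≤ 1 for every x and g(x)·(−1)^{|x|} ≥ 1/3 for every x ∈ S. Then the Fourier–Walsh coefficient of g at the full index set, ĝ(univ) = 2^{−N} · Σ_{x} g(x)·(−1)^{|x|}, is strictly positive; in particular the Fourier degree of g equals N. -/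
open Finset

theorem stmt_3 {N : ℕ} (hN : 1 ≤ N)
    (S : Finset (Fin N → Bool))
    (hS : (S.card : ℝ) ≥ (4 / 5) * 2 ^ N)
    (g : (Fin N → Bool) → ℝ) (hgb : ∀ x, |g x| ≤ 1)
    (hg : ∀ x ∈ S, g x * (-1 : ℝ) ^ (hw x) ≥ 1 / 3) :
    0 < walshCoeff g Finset.univ ∧ walshDegree g = N := by
  classical
  have hwalsh : ∀ x : Fin N → Bool, walsh (Finset.univ) x = (-1:ℝ) ^ (hw x) := fun x => rfl
  have hcardtot : (Fintype.card (Fin N → Bool)) = 2 ^ N := by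
    simp [Fintype.card_fun]
  have hSle : S.card ≤ 2 ^ N := by
    calc S.card ≤ Fintype.card (Fin N → Bool) := S.card_le_univ
      _ = 2 ^ N := hcardtot
  have hsplit : ∑ x : Fin N → Bool, g x * walsh Finset.univ x
      = ∑ x ∈ Finset.univ \ S, g x * walsh Finset.univ x
        + ∑ x ∈ S, g x * walsh Finset.univ x :=
    (Finset.sum_sdiff (Finset.subset_univ S)).symm
  have h1 : (S.card : ℝ) * (1/3) ≤ ∑ x ∈ S, g x * walsh Finset.univ x := by
    calc (S.card : ℝ) * (1/3) = ∑ _x ∈ S, (1/3 : ℝ) := by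
          rw [Finset.sum_const, nsmul_eq_mul]
      _ ≤ ∑ x ∈ S, g x * walsh Finset.univ x := by
          apply Finset.sum_le_sum
          intro x hx
          rw [hwalsh]
          exact hg x hx
  have h2 : -(((2:ℝ)^N) - S.card) ≤ ∑ x ∈ Finset.univ \ S, g x * walsh Finset.univ x := by
    have hterm : ∀ x : Fin N → Bool, (-1 : ℝ) ≤ g x * walsh Finset.univ x := by
      intro x
      have habs : |g x * walsh Finset.univ x| ≤ 1 := by
        rw [abs_mul]
        have : |walsh Finset.univ x| = 1 := by
          unfold walsh
          rw [abs_pow, abs_neg, abs_one, one_pow]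
        rw [this, mul_one]
        exact hgb x
      linarith [neg_abs_le (g x * walsh Finset.univ x)]
    have hcard : ((Finset.univ \ S).card : ℝ) = (2:ℝ)^N - S.card := by
      rw [Finset.card_sdiff_of_subset (Finset.subset_univ S), Finset.card_univ, hcardtot]
      push_cast [hSle]
      ring
    calc -(((2:ℝ)^N) - S.card) = ∑ _x ∈ Finset.univ \ S, (-1 : ℝ) := by
          rw [Finset.sum_const, nsmul_eq_mul, hcard]; ring
      _ ≤ _ := Finset.sum_le_sum fun x _ => hterm x
  have hpow : (0:ℝ) < 2 ^ N := by positivity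
  have hpos : 0 < ∑ x : Fin N → Bool, g x * walsh Finset.univ x := by
    rw [hsplit]
    nlinarith
  have hcoeff : 0 < walshCoeff g Finset.univ := by
    unfold walshCoeff
    exact mul_pos (inv_pos.2 hpow) hpos
  refine ⟨hcoeff, ?_⟩
  apply le_antisymm
  · apply Finset.sup_le
    intro B _
    calc B.card ≤ Fintype.card (Fin N) := B.card_le_univ
      _ = N := Fintype.card_fin N
  · have hmem : (Finset.univ : Finset (Fin N)) ∈
        (Finset.univ.filter fun B : Finset (Fin N) => walshCoeff g B ≠ 0) :=
      Finset.mem_filter.2 ⟨Finset.mem_univ _, ne_of_gt hcoeff⟩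
    have := Finset.le_sup (f := Finset.card) hmem
    simpa [walshDegree] using this
end

section
/- Let N ≥ 1 be a natural number and let S be a finite subset of {0,1}^N with |S| ≥ (4/5)·2^N. Let p be a real multivariate polynomial in N variables that is multilinear (has degree at most 1 in each variable), satisfies p(x) ∈ [0,1] for every x ∈ {0,1}^N, and satisfies |p(x) − PARITY(x)| ≤ 1/3 for every x ∈ S, where PARITY(x) ∈ {0,1} is the Hamming weight of x modulo 2. Then the total degree of p equals N. -/
/-- PARITY of a point of the Boolean cube, as a real number in {0,1}:
the Hamming weight modulo 2. -/
def parityVal {N : ℕ} (x : Fin N → Bool) : ℝ := ((hw x % 2 : ℕ) : ℝ)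

/-- The 0/1 point of ℝ^N corresponding to a point of the Boolean cube. -/
def toReal01 {N : ℕ} (x : Fin N → Bool) : Fin N → ℝ := fun i => if x i then 1 else 0

/-!
Multilinearity bounds the total degree by `N`. If it were smaller, every monomial would miss some
variable, and summing it against the character `(-1) ^ hw x` over the cube factors into a product
containing `∑ b, (-1) ^ b = 0`; so `p` would be uncorrelated with `(-1) ^ hw x = 1 - 2 PARITY(x)`.
But then `2 ^ N / 2 = ∑ PARITY(x) = ∑ (-1) ^ hw x (p x - PARITY(x))`, which is at most
`|S| / 3 + (2 ^ N - |S|) ≤ (7 / 15) 2 ^ N` since `p` is `1/3`-close to PARITY on `S` and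
`1`-close everywhere.
-/

open Finset MvPolynomial

theorem MvPolynomial.totalDegree_le_of_degreeOf_le {R σ : Type*} [CommSemiring R] [Fintype σ]
    {p : MvPolynomial σ R} {d : ℕ} (h : ∀ i, p.degreeOf i ≤ d) :
    p.totalDegree ≤ Fintype.card σ * d := by
  refine Finset.sup_le fun m hm => ?_
  calc m.sum (fun _ e => e) = ∑ i, m i := Finsupp.sum_fintype _ _ fun _ => rfl
    _ ≤ ∑ _i : σ, d := sum_le_sum fun i _ => degreeOf_le_iff.1 (h i) m hm
    _ = Fintype.card σ * d := by simp

lemma Finset.sum_le_card_nsmul_add_card_sdiff_nsmul {ι M : Type*} [AddCommMonoid M] [PartialOrder M]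
    [IsOrderedAddMonoid M] [DecidableEq ι] {s t : Finset ι} {f : ι → M} {a b : M} (hts : t ⊆ s)
    (ha : ∀ x ∈ t, f x ≤ a) (hb : ∀ x ∈ s \ t, f x ≤ b) :
    ∑ x ∈ s, f x ≤ #t • a + #(s \ t) • b := by
  rw [← sum_sdiff hts, add_comm]
  exact add_le_add (sum_le_card_nsmul _ _ _ ha) (sum_le_card_nsmul _ _ _ hb)

section Cube

variable {N : ℕ}

lemma neg_one_pow_hw_eq_prod (x : Fin N → Bool) :
    (-1 : ℝ) ^ hw x = ∏ i, (-1 : ℝ) ^ (x i).toNat := by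
  rw [prod_pow_eq_pow_sum, hw, card_filter]
  congr 1
  exact sum_congr rfl fun i _ => by cases x i <;> rfl

lemma sum_neg_one_pow_hw_mul_prod_pow_eq_zero {m : Fin N → ℕ} {i₀ : Fin N} (hm : m i₀ = 0) :
    ∑ x : Fin N → Bool, (-1 : ℝ) ^ hw x * ∏ i, toReal01 x i ^ m i = 0 := by
  simp_rw [neg_one_pow_hw_eq_prod, ← prod_mul_distrib, toReal01]
  rw [← Fintype.prod_sum (fun i b => (-1 : ℝ) ^ b.toNat * (if b = true then 1 else 0) ^ m i)]
  exact prod_eq_zero (mem_univ i₀) (by simp [hm])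

lemma sum_neg_one_pow_hw_mul_eval_eq_zero {p : MvPolynomial (Fin N) ℝ} (hp : p.totalDegree < N) :
    ∑ x : Fin N → Bool, (-1 : ℝ) ^ hw x * eval (toReal01 x) p = 0 := by
  simp_rw [eval_eq', mul_sum]
  rw [sum_comm]
  refine sum_eq_zero fun m hm => ?_
  obtain ⟨i₀, hi₀⟩ : ∃ i, m i = 0 := by
    by_contra! h
    have : N ≤ m.sum fun _ e => e :=
      calc N = ∑ _i : Fin N, 1 := by simp
        _ ≤ ∑ i, m i := sum_le_sum fun i _ => Nat.one_le_iff_ne_zero.2 (h i)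
        _ = m.sum fun _ e => e := (Finsupp.sum_fintype m (fun _ e => e) fun _ => rfl).symm
    exact (le_totalDegree hm).not_gt (hp.trans_le this)
  simp_rw [mul_left_comm _ (coeff m p), ← mul_sum, sum_neg_one_pow_hw_mul_prod_pow_eq_zero hi₀,
    mul_zero]

lemma parityVal_nonneg (x : Fin N → Bool) : 0 ≤ parityVal x := Nat.cast_nonneg _

lemma parityVal_le_one (x : Fin N → Bool) : parityVal x ≤ 1 :=
  Nat.cast_le_one.2 (Nat.le_of_lt_succ (Nat.mod_lt _ two_pos))

lemma neg_one_pow_hw_eq_one_sub_two_mul_parityVal (x : Fin N → Bool) :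
    (-1 : ℝ) ^ hw x = 1 - 2 * parityVal x := by
  rcases Nat.even_or_odd (hw x) with h | h
  · rw [h.neg_one_pow, parityVal, Nat.even_iff.1 h]; norm_num
  · rw [h.neg_one_pow, parityVal, Nat.odd_iff.1 h]; norm_num

lemma neg_one_pow_hw_mul_parityVal (x : Fin N → Bool) :
    (-1 : ℝ) ^ hw x * parityVal x = -parityVal x := by
  rcases Nat.even_or_odd (hw x) with h | h
  · rw [h.neg_one_pow, parityVal, Nat.even_iff.1 h]; norm_num
  · rw [h.neg_one_pow, parityVal, Nat.odd_iff.1 h]; norm_num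

lemma sum_neg_one_pow_hw (hN : 0 < N) : ∑ x : Fin N → Bool, (-1 : ℝ) ^ hw x = 0 := by
  simpa using sum_neg_one_pow_hw_mul_prod_pow_eq_zero (m := 0) (i₀ := ⟨0, hN⟩) rfl

lemma sum_parityVal (hN : 0 < N) : ∑ x : Fin N → Bool, parityVal x = 2 ^ N / 2 := by
  have := sum_neg_one_pow_hw hN
  simp only [neg_one_pow_hw_eq_one_sub_two_mul_parityVal, sum_sub_distrib, ← mul_sum, sum_const,
    card_univ, Fintype.card_fun, Fintype.card_bool, Fintype.card_fin, nsmul_eq_mul, mul_one] at this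
  push_cast at this
  linarith

end Cube

theorem stmt_4 {N : ℕ} (hN : 1 ≤ N)
    (S : Finset (Fin N → Bool))
    (hS : (S.card : ℝ) ≥ (4 / 5) * 2 ^ N)
    (p : MvPolynomial (Fin N) ℝ)
    (hml : ∀ i : Fin N, p.degreeOf i ≤ 1)
    (hp01 : ∀ x : Fin N → Bool, MvPolynomial.eval (toReal01 x) p ∈ Set.Icc (0 : ℝ) 1)
    (hpS : ∀ x ∈ S, |MvPolynomial.eval (toReal01 x) p - parityVal x| ≤ 1 / 3) :
    p.totalDegree = N := by
  refine le_antisymm (by simpa using totalDegree_le_of_degreeOf_le hml) (not_lt.1 fun hlt => ?_)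
  have hcorr := sum_neg_one_pow_hw_mul_eval_eq_zero hlt
  have herr : ∑ x, |eval (toReal01 x) p - parityVal x| ≤ #S • (1 / 3 : ℝ) + #(univ \ S) • 1 :=
    sum_le_card_nsmul_add_card_sdiff_nsmul (subset_univ S) hpS fun x _ =>
      abs_sub_le_of_nonneg_of_le (hp01 x).1 (hp01 x).2 (parityVal_nonneg x) (parityVal_le_one x)
  have hpar_le_err : ∑ x, parityVal x ≤ ∑ x, |eval (toReal01 x) p - parityVal x| :=
    calc ∑ x, parityVal x = ∑ x, (-1 : ℝ) ^ hw x * (eval (toReal01 x) p - parityVal x) := by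
          rw [← zero_add (∑ x, parityVal x), ← hcorr, ← sum_add_distrib]
          simp only [mul_sub, neg_one_pow_hw_mul_parityVal, sub_neg_eq_add]
      _ ≤ ∑ x, |eval (toReal01 x) p - parityVal x| := sum_le_sum fun x _ =>
          (le_abs_self _).trans_eq (by rw [abs_mul, abs_neg_one_pow, one_mul])
  have hcard : (#(univ \ S) : ℝ) = 2 ^ N - #S := by
    rw [card_univ_sdiff, Nat.cast_sub (card_le_univ S)]
    simp
  rw [sum_parityVal hN] at hpar_le_err
  rw [nsmul_eq_mul, nsmul_eq_mul, hcard] at herr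
  linarith [pow_pos (two_pos : (0 : ℝ) < 2) N]
end

section
/- Let N ≥ 13 be an odd natural number and define MAJ : (Fin N → Bool) → ℝ by MAJ(x) = 1 if the Hamming weight |x| satisfies |x| > N/2, and MAJ(x) = −1 otherwise. Let S be a finite set of points of the Boolean cube with |S| ≥ 2^N·(1 − 1/N²), and let Q : (Fin N → Bool) → ℝ satisfy |Q(x)| ≤ 1 for every x and Q(x)·MAJ(x) ≥ 1 − 1/N² for every x ∈ S. Then the Fourier–Walsh coefficient Q̂(univ) at the full index set is nonzero; in particular the Fourier degree of Q equals N. -/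
open Finset

/-- Majority on an odd number of bits, with ±1 output. -/
noncomputable def MAJ {N : ℕ} (x : Fin N → Bool) : ℝ :=
  if ((hw x : ℝ) > (N : ℝ) / 2) then 1 else -1

lemma alt_partial (n m : ℕ) :
    ∑ k ∈ Finset.range (m+1), (-1:ℝ)^k * ((n+1).choose k : ℝ) = (-1:ℝ)^m * (n.choose m : ℝ) := by
  induction m with
  | zero => simp
  | succ m ih =>
    rw [Finset.sum_range_succ, ih, Nat.choose_succ_succ]
    push_cast
    ring

lemma sum_hw {N : ℕ} (f : ℕ → ℝ) :
    ∑ x : Fin N → Bool, f (hw x) = ∑ k ∈ Finset.range (N+1), (N.choose k : ℝ) * f k := by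

  let e : Finset (Fin N) ≃ (Fin N → Bool) :=
    { toFun := fun A i => decide (i ∈ A)
      invFun := fun x => Finset.univ.filter fun i => x i = true
      left_inv := fun A => by ext i; simp
      right_inv := fun x => by funext i; simp }
  rw [← Fintype.sum_equiv e (fun A => f (hw (e A))) (fun x => f (hw x)) (fun A => rfl)]
  have hcard : ∀ A : Finset (Fin N), hw (e A) = A.card := by
    intro A; simp [hw, e]
  simp only [hcard]
  rw [show (Finset.univ : Finset (Finset (Fin N))) = (Finset.univ : Finset (Fin N)).powerset by
    simp [Finset.powerset_univ]]
  rw [Finset.sum_powerset_apply_card]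
  simp [Finset.card_univ, smul_eq_mul]

set_option maxHeartbeats 800000 in
theorem stmt_8 {N : ℕ} (hN : 13 ≤ N) (hodd : Odd N)
    (S : Finset (Fin N → Bool))
    (hS : (S.card : ℝ) ≥ 2 ^ N * (1 - 1 / (N : ℝ) ^ 2))
    (Q : (Fin N → Bool) → ℝ) (hQb : ∀ x, |Q x| ≤ 1)
    (hQM : ∀ x ∈ S, Q x * MAJ x ≥ 1 - 1 / (N : ℝ) ^ 2) :
    walshCoeff Q Finset.univ ≠ 0 ∧ walshDegree Q = N := by

  obtain ⟨m, hm⟩ := hodd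
  have hN0 : 0 < N := by omega
  have hNR : (0:ℝ) < N := by exact_mod_cast hN0
  have hNR13 : (13:ℝ) ≤ N := by exact_mod_cast hN
  have hwalsh : ∀ x : Fin N → Bool, walsh (Finset.univ : Finset (Fin N)) x = (-1:ℝ)^(hw x) :=
    fun x => rfl
  set F : ℕ → ℝ := fun k => (if ((k:ℝ) > (N:ℝ)/2) then (1:ℝ) else -1) * (-1)^k with hF
  have hMAJ : ∀ x : Fin N → Bool, MAJ x * walsh Finset.univ x = F (hw x) := fun x => rfl
  have hT : ∑ x : Fin N → Bool, MAJ x * walsh Finset.univ x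
      = ∑ k ∈ Finset.range (N+1), (N.choose k : ℝ) * F k := by
    simp only [hMAJ]; exact sum_hw F
  set A : ℝ := ∑ k ∈ Finset.range (m+1), (-1:ℝ)^k * (N.choose k : ℝ) with hA
  have hAval : A = (-1:ℝ)^m * ((N-1).choose m : ℝ) := by
    have h := alt_partial (N-1) m
    rwa [show N-1+1 = N by omega] at h
  have hfull : ∑ k ∈ Finset.range (N+1), (-1:ℝ)^k * (N.choose k : ℝ) = 0 := by
    have h := alt_partial (N-1) N
    rw [show N-1+1 = N by omega] at h
    rw [h, Nat.choose_eq_zero_of_lt (by omega)]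
    simp
  -- split the range
  have hsplit : ∀ g : ℕ → ℝ, ∑ k ∈ Finset.range (N+1), g k
      = ∑ k ∈ Finset.range (m+1), g k + ∑ k ∈ Finset.Ico (m+1) (N+1), g k := by
    intro g
    rw [Finset.range_eq_Ico, ← Finset.sum_Ico_consecutive _ (Nat.zero_le (m+1)) (by omega : m+1 ≤ N+1), Finset.range_eq_Ico]
  have hIco : ∑ k ∈ Finset.Ico (m+1) (N+1), (-1:ℝ)^k * (N.choose k : ℝ) = -A := by
    have h := hsplit (fun k => (-1:ℝ)^k * (N.choose k : ℝ))
    rw [hfull] at h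
    rw [← hA] at h
    linarith
  have hTval : ∑ k ∈ Finset.range (N+1), (N.choose k : ℝ) * F k = -2 * A := by
    rw [hsplit (fun k => (N.choose k : ℝ) * F k)]
    have h1 : ∑ k ∈ Finset.range (m+1), (N.choose k:ℝ) * F k
        = -∑ k ∈ Finset.range (m+1), (-1:ℝ)^k * (N.choose k : ℝ) := by
      rw [← Finset.sum_neg_distrib]
      refine Finset.sum_congr rfl fun k hk => ?_
      rw [Finset.mem_range] at hk
      have hk' : ¬ ((k:ℝ) > (N:ℝ)/2) := by
        push_neg
        rw [le_div_iff₀ (by norm_num : (0:ℝ) < 2)]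
        have h3 : k*2 ≤ N := by omega
        exact_mod_cast h3
      simp only [hF, if_neg hk']
      ring
    have h2 : ∑ k ∈ Finset.Ico (m+1) (N+1), (N.choose k:ℝ) * F k
        = ∑ k ∈ Finset.Ico (m+1) (N+1), (-1:ℝ)^k * (N.choose k : ℝ) := by
      refine Finset.sum_congr rfl fun k hk => ?_
      rw [Finset.mem_Ico] at hk
      have hk' : ((k:ℝ) > (N:ℝ)/2) := by
        rw [gt_iff_lt, div_lt_iff₀ (by norm_num : (0:ℝ) < 2)]
        have : (N:ℝ) < 2*k := by
          have : N < 2*k := by omega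
          exact_mod_cast this
        linarith
      simp only [hF, if_pos hk']
      ring
    rw [h1, h2, hIco, ← hA]
    ring
    -- central binomial lower bound
  have hcb : 2^(N-1) ≤ N * (N-1).choose m := by
    have h1 : 2^(N-1) = ∑ k ∈ Finset.range N, (N-1).choose k := by
      rw [← Nat.sum_range_choose (N-1), show N-1+1 = N by omega]
    have h2 : ∑ k ∈ Finset.range N, (N-1).choose k ≤ ∑ _k ∈ Finset.range N, (N-1).choose m := by
      refine Finset.sum_le_sum fun k _ => ?_
      have h := Nat.choose_le_middle k (N-1)
      rwa [show (N-1)/2 = m by omega] at h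
    calc 2^(N-1) = ∑ k ∈ Finset.range N, (N-1).choose k := h1
      _ ≤ ∑ _k ∈ Finset.range N, (N-1).choose m := h2
      _ = N * (N-1).choose m := by rw [Finset.sum_const, smul_eq_mul, Finset.card_range]
  have hCR : (2:ℝ)^(N-1) ≤ (N:ℝ) * ((N-1).choose m : ℝ) := by exact_mod_cast hcb
  have hp2 : (0:ℝ) < 2^N := by positivity
  have habs2 : |(-2 : ℝ) * ((-1:ℝ)^m * (((N-1).choose m : ℕ) : ℝ))|
      = 2 * (((N-1).choose m : ℕ) : ℝ) := by
    rw [abs_mul, abs_mul, abs_pow]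
    simp [Nat.abs_cast]
  have hcabs : |walshCoeff (MAJ (N := N)) Finset.univ|
      = ((2:ℝ)^N)⁻¹ * (2 * (((N-1).choose m : ℕ) : ℝ)) := by
    rw [walshCoeff, hT, hTval, hAval, abs_mul, abs_inv, abs_pow, habs2]
    norm_num
  have hc : (1:ℝ)/N ≤ |walshCoeff (MAJ (N := N)) Finset.univ| := by
    rw [hcabs, inv_mul_eq_div, div_le_div_iff₀ hNR hp2]
    have hpow : (2:ℝ)^N = 2 * 2^(N-1) := by
      rw [← pow_succ']
      congr 1
      omega
    nlinarith [hCR]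
  -- cardinality of the complement
  have hcardU : (((Finset.univ : Finset (Fin N → Bool)).card : ℕ) : ℝ) = 2^N := by
    simp [Finset.card_univ]
  have hScard : (S.card : ℝ) ≤ 2^N := by
    rw [← hcardU]
    exact_mod_cast Finset.card_le_univ S
  have hSc : (((Finset.univ \ S).card : ℕ) : ℝ) ≤ 2^N / (N:ℝ)^2 := by
    have h1 : (((Finset.univ \ S).card : ℕ) : ℝ) = 2^N - S.card := by
      rw [Finset.card_sdiff_of_subset (Finset.subset_univ S), Nat.cast_sub (Finset.card_le_card (Finset.subset_univ S)), hcardU]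
    rw [h1]
    have h2 : (2:ℝ)^N * (1 - 1/(N:ℝ)^2) = 2^N - 2^N/(N:ℝ)^2 := by ring
    linarith [hS]
  have hε : (0:ℝ) ≤ 1/(N:ℝ)^2 := by positivity
  have hdiffpt : ∀ x ∈ S, |Q x - MAJ x| ≤ 1/(N:ℝ)^2 := by
    intro x hx
    have h1 := hQM x hx
    have h2 := abs_le.mp (hQb x)
    rw [abs_le]
    by_cases h : ((hw x : ℝ) > (N:ℝ)/2)
    · simp only [MAJ, if_pos h, mul_one] at h1 ⊢
      constructor <;> linarith [h2.1, h2.2]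
    · simp only [MAJ, if_neg h] at h1 ⊢
      constructor <;> nlinarith [h2.1, h2.2]
  have hMb : ∀ x : Fin N → Bool, |MAJ x| ≤ 1 := by
    intro x
    unfold MAJ
    split <;> norm_num
  have hDsum : ∑ x : Fin N → Bool, |Q x - MAJ x| ≤ 3 * 2^N / (N:ℝ)^2 := by
    rw [← Finset.sum_sdiff (Finset.subset_univ S)]
    have hb1 : ∑ x ∈ S, |Q x - MAJ x| ≤ (S.card : ℝ) * (1/(N:ℝ)^2) := by
      calc ∑ x ∈ S, |Q x - MAJ x| ≤ ∑ _x ∈ S, 1/(N:ℝ)^2 := Finset.sum_le_sum hdiffpt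
        _ = (S.card:ℝ) * (1/(N:ℝ)^2) := by rw [Finset.sum_const, nsmul_eq_mul]
    have hb2 : ∑ x ∈ Finset.univ \ S, |Q x - MAJ x| ≤ (((Finset.univ \ S).card : ℕ) : ℝ) * 2 := by
      calc ∑ x ∈ Finset.univ \ S, |Q x - MAJ x| ≤ ∑ _x ∈ Finset.univ \ S, (2:ℝ) := by
            refine Finset.sum_le_sum fun x _ => ?_
            calc |Q x - MAJ x| ≤ |Q x| + |MAJ x| := abs_sub _ _
              _ ≤ 2 := by linarith [hQb x, hMb x]
        _ = _ := by rw [Finset.sum_const, nsmul_eq_mul]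
    have e1 : (S.card:ℝ) * (1/(N:ℝ)^2) ≤ 2^N/(N:ℝ)^2 := by
      rw [mul_one_div]
      gcongr
    have e2 : (((Finset.univ \ S).card : ℕ) : ℝ) * 2 ≤ 2 * (2^N/(N:ℝ)^2) := by
      linarith [hSc]
    have h3 : 3 * 2^N / (N:ℝ)^2 = 2^N/(N:ℝ)^2 + 2 * (2^N/(N:ℝ)^2) := by ring
    exact le_trans (add_le_add hb2 hb1) (by linarith only [e1, e2, h3])
  have hdc : |walshCoeff Q Finset.univ - walshCoeff (MAJ (N := N)) Finset.univ| ≤ 3/(N:ℝ)^2 := by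
    have hsum : walshCoeff Q Finset.univ - walshCoeff (MAJ (N := N)) Finset.univ
        = ((2:ℝ)^N)⁻¹ * ∑ x : Fin N → Bool, (Q x - MAJ x) * walsh Finset.univ x := by
      unfold walshCoeff
      rw [← mul_sub, ← Finset.sum_sub_distrib]
      exact congrArg _ (Finset.sum_congr rfl fun x _ => by ring)
    have habs : |∑ x : Fin N → Bool, (Q x - MAJ x) * walsh Finset.univ x|
        ≤ 3 * 2^N / (N:ℝ)^2 := by
      calc |∑ x : Fin N → Bool, (Q x - MAJ x) * walsh Finset.univ x|
          ≤ ∑ x : Fin N → Bool, |(Q x - MAJ x) * walsh Finset.univ x| :=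
            Finset.abs_sum_le_sum_abs _ _
        _ = ∑ x : Fin N → Bool, |Q x - MAJ x| := by
            refine Finset.sum_congr rfl fun x _ => ?_
            rw [abs_mul, hwalsh, abs_pow, abs_neg, abs_one, one_pow, mul_one]
        _ ≤ _ := hDsum
    rw [hsum, abs_mul, abs_inv, abs_pow, show |(2:ℝ)| = 2 by norm_num]
    calc ((2:ℝ)^N)⁻¹ * |∑ x : Fin N → Bool, (Q x - MAJ x) * walsh Finset.univ x|
        ≤ ((2:ℝ)^N)⁻¹ * (3 * 2^N / (N:ℝ)^2) :=
          mul_le_mul_of_nonneg_left habs (by positivity)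
      _ = 3/(N:ℝ)^2 := by field_simp
  have h3N : 3/(N:ℝ)^2 < 1/(N:ℝ) := by
    rw [div_lt_div_iff₀ (by positivity) hNR]
    nlinarith [hNR13]
  have hpos : 0 < |walshCoeff Q Finset.univ| := by
    have ht := abs_sub_abs_le_abs_sub (walshCoeff (MAJ (N := N)) Finset.univ) (walshCoeff Q Finset.univ)
    rw [abs_sub_comm] at ht
    linarith [hc, hdc, ht]
  have hne : walshCoeff Q Finset.univ ≠ 0 := abs_pos.mp hpos
  refine ⟨hne, le_antisymm ?_ ?_⟩
  · unfold walshDegree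
    apply Finset.sup_le
    intro B _
    simpa using Finset.card_le_univ B
  · unfold walshDegree
    have hmem : (Finset.univ : Finset (Fin N)) ∈ Finset.univ.filter
        (fun B : Finset (Fin N) => walshCoeff Q B ≠ 0) :=
      Finset.mem_filter.mpr ⟨Finset.mem_univ _, hne⟩
    simpa using Finset.le_sup (f := Finset.card) hmem
end
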